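/- arXiv:2207.09541 — 3 statements merged into one kernel-verified Lean document; each statement's English description precedes it below -/
import Mathlib

section
/- Fix λ > 0. A joint probability distribution p on {1,…,I}×{1,…,J} satisfies p_{i,j} = p_{i·} p_{·j} for all i, j if and only if its joint power escort p* satisfies p*_{i,j} = p*_{i·} p*_{·j} for all i, j. That is, X ⊥ Y if and only if X* ⊥ Y*. -/
open MeasureTheory ProbabilityTheory Real Finset Filter Topology

noncomputable section

/-- Row marginal. -/
def rowM {I J : ℕ} (p : Fin I → Fin J → ℝ) (i : Fin I) : ℝ := ∑ j, p i j

/-- Column marginal. -/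
def colM {I J : ℕ} (p : Fin I → Fin J → ℝ) (j : Fin J) : ℝ := ∑ i, p i j

/-- Joint probability distribution. -/
def IsJointDist {I J : ℕ} (p : Fin I → Fin J → ℝ) : Prop :=
  (∀ i j, 0 ≤ p i j) ∧ ∑ i, ∑ j, p i j = 1

/-- Independence of the two coordinates. -/
def IndepDist {I J : ℕ} (p : Fin I → Fin J → ℝ) : Prop :=
  ∀ i j, p i j = rowM p i * colM p j

def cLam {I J : ℕ} (l : ℝ) (p : Fin I → Fin J → ℝ) : ℝ := ∑ i, ∑ j, p i j ^ l

/-- Joint power escort distribution. -/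
def pStar {I J : ℕ} (l : ℝ) (p : Fin I → Fin J → ℝ) (i : Fin I) (j : Fin J) : ℝ :=
  p i j ^ l / cLam l p

def rowStar {I J : ℕ} (l : ℝ) (p : Fin I → Fin J → ℝ) (i : Fin I) : ℝ := ∑ j, pStar l p i j
def colStar {I J : ℕ} (l : ℝ) (p : Fin I → Fin J → ℝ) (j : Fin J) : ℝ := ∑ i, pStar l p i j

/-- Row-marginal power escort. -/
def qEsc {I J : ℕ} (l : ℝ) (p : Fin I → Fin J → ℝ) (i : Fin I) : ℝ :=
  rowM p i ^ l / ∑ s, rowM p s ^ l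

/-- Column-marginal power escort. -/
def rEsc {I J : ℕ} (l : ℝ) (p : Fin I → Fin J → ℝ) (j : Fin J) : ℝ :=
  colM p j ^ l / ∑ t, colM p t ^ l

/-- `x ln x` with the convention `0 ln 0 = 0` (automatic since `Real.log 0 = 0`). -/
def mlog (x : ℝ) : ℝ := x * Real.log x

def TA {I J : ℕ} (l : ℝ) (p : Fin I → Fin J → ℝ) : ℝ :=
  (∑ i, ∑ j, mlog (pStar l p i j)) - (∑ i, mlog (qEsc l p i)) - (∑ j, mlog (rEsc l p j))

def TB {I J : ℕ} (l : ℝ) (p : Fin I → Fin J → ℝ) : ℝ :=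
  (∑ i, mlog (qEsc l p i)) + (∑ j, mlog (rEsc l p j))
    - (∑ i, mlog (rowStar l p i)) - (∑ j, mlog (colStar l p j))

/-- Empirical joint distribution from a sample of size `n`. -/
def emp {I J : ℕ} {Ω : Type*} (W : ℕ → Ω → Fin I × Fin J) (n : ℕ) (ω : Ω)
    (i : Fin I) (j : Fin J) : ℝ :=
  (((Finset.range n).filter (fun k => W k ω = (i, j))).card : ℝ) / n

/-- Index set for the vector `v`: all cells except `(I, J)`. -/
abbrev VIdx (I J : ℕ) := {x : Fin (I + 1) × Fin (J + 1) // x ≠ (Fin.last I, Fin.last J)}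

/-- Reconstruct a joint distribution from its `IJ-1` free coordinates. -/
def fill {I J : ℕ} (v : VIdx I J → ℝ) : Fin (I + 1) → Fin (J + 1) → ℝ :=
  fun i j => if h : (i, j) = (Fin.last I, Fin.last J) then 1 - ∑ s, v s else v ⟨(i, j), h⟩

/-- Gradient of `T_A` (as a function of the free coordinates `v`), coordinate `s`. -/
def gradTA {I J : ℕ} (l : ℝ) (p : Fin (I + 1) → Fin (J + 1) → ℝ) (s : VIdx I J) : ℝ :=
  fderiv ℝ (fun w : VIdx I J → ℝ => TA l (fill w)) (fun t => p t.1.1 t.1.2) (Pi.single s 1)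

/-- The delta-method variance `σ² = ∇ᵀ Σ(v) ∇`. -/
def sigma2 {I J : ℕ} (l : ℝ) (p : Fin (I + 1) → Fin (J + 1) → ℝ) : ℝ :=
  ∑ s : VIdx I J, ∑ t : VIdx I J,
    gradTA l p s * ((if s = t then p s.1.1 s.1.2 else 0) - p s.1.1 s.1.2 * p t.1.1 t.1.2)
      * gradTA l p t

/-- Chi-squared measure with `k` degrees of freedom: `Gamma(k/2, 1/2)`. -/
def chiSquared (k : ℝ) : Measure ℝ := gammaMeasure (k / 2) (1 / 2)

/- The power escort keeps a product `a i * b j` of product form, and `x ↦ x ^ l` is undone by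
`x ↦ x ^ l⁻¹` on nonnegative reals; up to normalisation, the escort of order `l⁻¹` of `p*` is
therefore `p` again. So independence passes from `p` to `p*`, and back from `p*` to `p`. -/

section Escort

variable {I J : ℕ}

lemma rowM_mul_colM_of_eq_mul {q : Fin I → Fin J → ℝ} {a : Fin I → ℝ} {b : Fin J → ℝ}
    (h : ∀ i j, q i j = a i * b j) (i : Fin I) (j : Fin J) :
    rowM q i * colM q j = (∑ s, ∑ t, q s t) * q i j := by
  simp only [rowM, colM, h, ← mul_sum, ← sum_mul]
  ring

lemma cLam_pos {p : Fin I → Fin J → ℝ} (hp : IsJointDist p) (l : ℝ) : 0 < cLam l p := by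
  obtain ⟨i, -, j, -, hij⟩ : ∃ i ∈ univ, ∃ j ∈ univ, p i j ≠ 0 := by
    by_contra! h
    simpa [sum_eq_zero fun i _ => sum_eq_zero (h i (mem_univ i))] using hp.2
  have hpos : 0 < p i j ^ l := rpow_pos_of_pos ((hp.1 i j).lt_of_ne' hij) l
  exact sum_pos' (fun s _ => sum_nonneg fun t _ => rpow_nonneg (hp.1 s t) l)
    ⟨i, mem_univ i, sum_pos' (fun t _ => rpow_nonneg (hp.1 i t) l) ⟨j, mem_univ j, hpos⟩⟩

lemma pStar_nonneg {p : Fin I → Fin J → ℝ} (hp : ∀ i j, 0 ≤ p i j) (l : ℝ) (i : Fin I)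
    (j : Fin J) : 0 ≤ pStar l p i j :=
  div_nonneg (rpow_nonneg (hp i j) l) (sum_nonneg fun s _ => sum_nonneg fun t _ =>
    rpow_nonneg (hp s t) l)

lemma sum_sum_pStar {l : ℝ} {p : Fin I → Fin J → ℝ} (hc : cLam l p ≠ 0) :
    ∑ i, ∑ j, pStar l p i j = 1 := by
  simp only [pStar, ← sum_div]
  exact div_self hc

lemma indepDist_pStar {p : Fin I → Fin J → ℝ} (hp : ∀ i j, 0 ≤ p i j) (h : IndepDist p)
    (l : ℝ) : IndepDist (pStar l p) := by
  have hprod : ∀ i j, pStar l p i j = rowM p i ^ l * (colM p j ^ l / cLam l p) := fun i j => by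
    have hrow : 0 ≤ rowM p i := sum_nonneg fun t _ => hp i t
    have hcol : 0 ≤ colM p j := sum_nonneg fun s _ => hp s j
    rw [pStar, h i j, mul_rpow hrow hcol, mul_div_assoc]
  intro i j
  rw [rowM_mul_colM_of_eq_mul hprod]
  rcases eq_or_ne (cLam l p) 0 with hc | hc
  · simp [pStar, hc]
  · rw [sum_sum_pStar hc, one_mul]

lemma pStar_inv_pStar {l : ℝ} (hl : l ≠ 0) {p : Fin I → Fin J → ℝ} (hp : IsJointDist p) :
    pStar l⁻¹ (pStar l p) = p := by
  have hc := cLam_pos hp l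
  have hroot : ∀ i j, pStar l p i j ^ l⁻¹ = p i j / cLam l p ^ l⁻¹ := fun i j => by
    rw [pStar, div_rpow (rpow_nonneg (hp.1 i j) l) hc.le, rpow_rpow_inv (hp.1 i j) hl]
  have hc' : cLam l⁻¹ (pStar l p) = (cLam l p ^ l⁻¹)⁻¹ := by
    simp only [cLam, hroot, ← sum_div, hp.2, one_div]
  have hroot_pos : 0 < cLam l p ^ l⁻¹ := rpow_pos_of_pos hc _
  ext i j
  rw [pStar, hroot, hc']
  field_simp

end Escort

/-- `X ⊥ Y` if and only if `X* ⊥ Y*`. -/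
theorem indep_iff_escort_indep {I J : ℕ} (l : ℝ) (hl : 0 < l)
    (p : Fin I → Fin J → ℝ) (hp : IsJointDist p) :
    IndepDist p ↔ (∀ i j, pStar l p i j = rowStar l p i * colStar l p j) := by
  refine ⟨fun h => indepDist_pStar hp.1 h l, fun h => ?_⟩
  have hstar : IndepDist (pStar l⁻¹ (pStar l p)) :=
    indepDist_pStar (pStar_nonneg hp.1 l) h l⁻¹
  rwa [pStar_inv_pStar hl.ne' hp] at hstar

end
end

section
/- Suppose all p_{i,j} > 0 and p_{i,j} = p_{i·} p_{·j} for all i, j (the hypothesis of independence), and fix λ > 0. Then √n (T̂_A + T̂_B) converges to 0 in probability as n → ∞. -/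
open MeasureTheory ProbabilityTheory Real Finset Filter Topology

noncomputable section

/-! For `q` with positive entries, `T_A(q) + T_B(q)` is the Kullback–Leibler divergence of the
joint escort `q*` from the product `q*_{i·} q*_{·j}` of its marginals, so it lies between `0` and
the χ²-divergence `∑ (q*_{ij} - q*_{i·} q*_{·j})² / (q*_{i·} q*_{·j})`. The numerators are smooth
in `q` and vanish at `p` by independence, hence `T_A + T_B = O(‖q - p‖²)` near `p`. Chebyshev's
inequality for the cell counts gives `P(‖p̂ - p‖ ≥ δ) ≤ IJ / (4nδ²)`, so `√n ‖p̂ - p‖² → 0` in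
probability, and with it `√n (T̂_A + T̂_B)`. -/

open Asymptotics

lemma sub_le_mul_log_div {x r : ℝ} (hx : 0 < x) (hr : 0 < r) : x - r ≤ x * log (x / r) := by
  have h := mul_le_mul_of_nonneg_left (log_le_sub_one_of_pos (div_pos hr hx)) hx.le
  rw [log_div hr.ne' hx.ne', ← neg_sub, ← log_div hx.ne' hr.ne', mul_sub,
    mul_div_cancel₀ _ hx.ne'] at h
  linarith

lemma mul_log_div_le {x r : ℝ} (hx : 0 ≤ x) (hr : 0 < r) :
    x * log (x / r) ≤ (x - r) ^ 2 / r + (x - r) := by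
  rcases hx.eq_or_lt with rfl | hx
  · simp [sq, hr.ne']
  calc x * log (x / r) ≤ x * (x / r - 1) :=
        mul_le_mul_of_nonneg_left (log_le_sub_one_of_pos (div_pos hx hr)) hx.le
    _ = (x - r) ^ 2 / r + (x - r) := by field_simp; ring

section Divergence

variable {ι : Type*} [Fintype ι] {x r : ι → ℝ}

lemma sum_mul_log_div_nonneg (hx : ∀ i, 0 < x i) (hr : ∀ i, 0 < r i)
    (hxr : ∑ i, x i = ∑ i, r i) : 0 ≤ ∑ i, x i * log (x i / r i) :=
  calc 0 = ∑ i, (x i - r i) := by rw [sum_sub_distrib, hxr, sub_self]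
    _ ≤ _ := sum_le_sum fun i _ => sub_le_mul_log_div (hx i) (hr i)

lemma sum_mul_log_div_le_sum_sq_div (hx : ∀ i, 0 ≤ x i) (hr : ∀ i, 0 < r i)
    (hxr : ∑ i, x i = ∑ i, r i) : ∑ i, x i * log (x i / r i) ≤ ∑ i, (x i - r i) ^ 2 / r i :=
  calc ∑ i, x i * log (x i / r i) ≤ ∑ i, ((x i - r i) ^ 2 / r i + (x i - r i)) :=
        sum_le_sum fun i _ => mul_log_div_le (hx i) (hr i)
    _ = _ := by rw [sum_add_distrib, sum_sub_distrib, hxr, sub_self, add_zero]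

end Divergence

section Escort

variable {I J : ℕ} {l : ℝ} {q : Fin I → Fin J → ℝ}

lemma sum_pStar : ∑ i, ∑ j, pStar l q i j = cLam l q / cLam l q := by
  simp only [pStar, ← sum_div, cLam]

lemma sum_rowStar_mul_colStar :
    ∑ x : Fin I × Fin J, rowStar l q x.1 * colStar l q x.2
      = ∑ x : Fin I × Fin J, pStar l q x.1 x.2 := by
  have hrow : ∑ i, rowStar l q i = ∑ i, ∑ j, pStar l q i j := rfl
  have hcol : ∑ j, colStar l q j = ∑ i, ∑ j, pStar l q i j := sum_comm
  simp only [Fintype.sum_prod_type]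
  -- the total escort mass `c / c` is `0` or `1`, hence idempotent
  rw [← sum_mul_sum, hrow, hcol, sum_pStar]
  rcases eq_or_ne (cLam l q) 0 with h | h <;> simp [h]

lemma cLam_pos_s8 (hq : ∀ i j, 0 < q i j) (i : Fin I) (j : Fin J) : 0 < cLam l q :=
  sum_pos (fun i _ => sum_pos (fun j _ => rpow_pos_of_pos (hq i j) l) ⟨j, mem_univ j⟩)
    ⟨i, mem_univ i⟩

lemma pStar_pos (hq : ∀ i j, 0 < q i j) (i : Fin I) (j : Fin J) : 0 < pStar l q i j :=
  div_pos (rpow_pos_of_pos (hq i j) l) (cLam_pos_s8 hq i j)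

lemma rowStar_mul_colStar_pos (hq : ∀ i j, 0 < q i j) (i : Fin I) (j : Fin J) :
    0 < rowStar l q i * colStar l q j := by
  have hq' := pStar_pos (l := l) hq
  have hrow : pStar l q i j ≤ rowStar l q i :=
    single_le_sum (fun j _ => (hq' i j).le) (mem_univ j)
  have hcol : pStar l q i j ≤ colStar l q j :=
    single_le_sum (f := fun i => pStar l q i j) (fun i _ => (hq' i j).le) (mem_univ i)
  exact mul_pos ((hq' i j).trans_le hrow) ((hq' i j).trans_le hcol)

lemma TA_add_TB_eq_sum_mul_log_div (hq : ∀ i j, 0 < q i j) :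
    TA l q + TB l q = ∑ x : Fin I × Fin J,
      pStar l q x.1 x.2 * log (pStar l q x.1 x.2 / (rowStar l q x.1 * colStar l q x.2)) := by
  have hrow : ∑ i, mlog (rowStar l q i) = ∑ i, ∑ j, pStar l q i j * log (rowStar l q i) := by
    simp only [mlog, rowStar, sum_mul]
  have hcol : ∑ j, mlog (colStar l q j) = ∑ i, ∑ j, pStar l q i j * log (colStar l q j) := by
    rw [sum_comm]
    simp only [mlog, colStar, sum_mul]
  have hterm : ∀ i j, pStar l q i j * log (pStar l q i j / (rowStar l q i * colStar l q j))
      = mlog (pStar l q i j) - pStar l q i j * log (rowStar l q i)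
        - pStar l q i j * log (colStar l q j) := by
    intro i j
    have hrc := rowStar_mul_colStar_pos (l := l) hq i j
    rw [log_div (pStar_pos hq i j).ne' hrc.ne',
      log_mul (left_ne_zero_of_mul hrc.ne') (right_ne_zero_of_mul hrc.ne'), mlog]
    ring
  rw [TA, TB, hrow, hcol]
  simp only [Fintype.sum_prod_type, hterm, sum_sub_distrib]
  ring

lemma TA_add_TB_nonneg (hq : ∀ i j, 0 < q i j) : 0 ≤ TA l q + TB l q := by
  rw [TA_add_TB_eq_sum_mul_log_div hq]
  exact sum_mul_log_div_nonneg (fun x => pStar_pos hq x.1 x.2)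
    (fun x => rowStar_mul_colStar_pos hq x.1 x.2) sum_rowStar_mul_colStar.symm

lemma TA_add_TB_le_sum_sq_div (hq : ∀ i j, 0 < q i j) :
    TA l q + TB l q ≤ ∑ x : Fin I × Fin J,
      (pStar l q x.1 x.2 - rowStar l q x.1 * colStar l q x.2) ^ 2
        / (rowStar l q x.1 * colStar l q x.2) := by
  rw [TA_add_TB_eq_sum_mul_log_div hq]
  exact sum_mul_log_div_le_sum_sq_div (fun x => (pStar_pos hq x.1 x.2).le)
    (fun x => rowStar_mul_colStar_pos hq x.1 x.2) sum_rowStar_mul_colStar.symm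

lemma pStar_eq_rowStar_mul_colStar_of_eq_mul {a : Fin I → ℝ} {b : Fin J → ℝ}
    (ha : ∀ i, 0 ≤ a i) (hb : ∀ j, 0 ≤ b j) (hq : ∀ i j, q i j = a i * b j) (i : Fin I)
    (j : Fin J) : pStar l q i j = rowStar l q i * colStar l q j := by
  have hpow : ∀ i j, q i j ^ l = a i ^ l * b j ^ l := fun i j => by
    rw [hq, mul_rpow (ha i) (hb j)]
  have hc : cLam l q = (∑ i, a i ^ l) * ∑ j, b j ^ l := by
    simp only [cLam, hpow, sum_mul_sum]
  simp only [rowStar, colStar, pStar, hpow, hc, ← sum_div, ← mul_sum, ← sum_mul]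
  rcases eq_or_ne ((∑ i, a i ^ l) * ∑ j, b j ^ l) 0 with h | h
  · simp [h]
  · field_simp

end Escort

section LocalEstimate

variable {I J : ℕ} {l : ℝ} {p : Fin I → Fin J → ℝ}

lemma IsJointDist.nonempty (hp : IsJointDist p) : Nonempty (Fin I × Fin J) := by
  by_contra h
  rw [not_nonempty_iff] at h
  simpa [← Fintype.sum_prod_type'] using hp.2

lemma differentiableAt_pStar (hpos : ∀ i j, 0 < p i j) (hc : cLam l p ≠ 0) (i : Fin I)
    (j : Fin J) : DifferentiableAt ℝ (fun q => pStar l q i j) p := by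
  unfold pStar cLam at *
  fun_prop (disch := first | exact hc | exact Or.inl (hpos _ _).ne')

lemma differentiableAt_rowStar_mul_colStar (hpos : ∀ i j, 0 < p i j) (hc : cLam l p ≠ 0)
    (i : Fin I) (j : Fin J) :
    DifferentiableAt ℝ (fun q => rowStar l q i * colStar l q j) p := by
  have := differentiableAt_pStar hpos hc
  unfold rowStar colStar
  fun_prop

lemma pStar_sub_rowStar_mul_colStar_isBigO (hpos : ∀ i j, 0 < p i j) (hc : cLam l p ≠ 0)
    (hind : IndepDist p) (i : Fin I) (j : Fin J) :
    (fun q => pStar l q i j - rowStar l q i * colStar l q j) =O[𝓝 p] fun q => ‖q - p‖ := by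
  set D := fun (q : Fin I → Fin J → ℝ) i j => pStar l q i j - rowStar l q i * colStar l q j
  have hD : DifferentiableAt ℝ D p := by
    have := differentiableAt_pStar hpos hc
    have := differentiableAt_rowStar_mul_colStar hpos hc
    fun_prop
  have hDp : D p = 0 := by
    ext i j
    exact sub_eq_zero.2 (pStar_eq_rowStar_mul_colStar_of_eq_mul
      (fun i => sum_nonneg fun j _ => (hpos i j).le)
      (fun j => sum_nonneg fun i _ => (hpos i j).le) hind i j)
  have hcoord : (fun q => D q i j) =O[𝓝 p] D :=
    isBigO_of_le _ fun q => (norm_le_pi_norm (D q i) j).trans (norm_le_pi_norm (D q) i)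
  have hlin : D =O[𝓝 p] fun q => ‖q - p‖ := by
    simpa only [hDp, sub_zero] using hD.isBigO_sub.norm_right
  exact hcoord.trans hlin

lemma TA_add_TB_isBigO [Nonempty (Fin I × Fin J)] (hpos : ∀ i j, 0 < p i j)
    (hind : IndepDist p) : (fun q => TA l q + TB l q) =O[𝓝 p] fun q => ‖q - p‖ ^ 2 := by
  obtain ⟨i₀, j₀⟩ := Classical.arbitrary (Fin I × Fin J)
  have hc : cLam l p ≠ 0 := (cLam_pos_s8 hpos i₀ j₀).ne'
  have hterm : ∀ x : Fin I × Fin J,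
      (fun q => (pStar l q x.1 x.2 - rowStar l q x.1 * colStar l q x.2) ^ 2
        / (rowStar l q x.1 * colStar l q x.2)) =O[𝓝 p] fun q => ‖q - p‖ ^ 2 := by
    rintro ⟨i, j⟩
    have hinv : (fun q => (rowStar l q i * colStar l q j)⁻¹) =O[𝓝 p] fun _ => (1 : ℝ) :=
      ((differentiableAt_rowStar_mul_colStar hpos hc i j).continuousAt.inv₀
        (rowStar_mul_colStar_pos hpos i j).ne').tendsto.isBigO_one ℝ
    simpa [div_eq_mul_inv] using
      ((pStar_sub_rowStar_mul_colStar_isBigO hpos hc hind i j).pow 2).mul hinv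
  have hnear : ∀ᶠ q in 𝓝 p, ∀ i j, 0 < q i j := by
    simp only [eventually_all]
    exact fun i j => (continuous_apply_apply i j).continuousAt.eventually (lt_mem_nhds (hpos i j))
  refine IsBigO.trans ?_ (IsBigO.fun_sum (s := univ) fun x _ => hterm x)
  refine IsBigO.of_bound 1 ?_
  filter_upwards [hnear] with q hq
  have hlow := TA_add_TB_nonneg (l := l) hq
  have hupp := TA_add_TB_le_sum_sq_div (l := l) hq
  rwa [one_mul, norm_of_nonneg hlow, norm_of_nonneg (hlow.trans hupp)]

end LocalEstimate

lemma TendstoInMeasure.mul_comp_of_isBigO_sq {Ω E ι : Type*} [MeasurableSpace Ω]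
    {μ : Measure Ω} [SeminormedAddCommGroup E] {l : Filter ι} {a : ι → ℝ} {f : ι → Ω → E}
    {p : E} {F : E → ℝ} (ha : ∀ᶠ n in l, 1 ≤ a n) (hF : F =O[𝓝 p] fun q => ‖q - p‖ ^ 2)
    (hf : TendstoInMeasure μ (fun n ω => a n * ‖f n ω - p‖ ^ 2) l fun _ => 0) :
    TendstoInMeasure μ (fun n ω => a n * F (f n ω)) l fun _ => 0 := by
  obtain ⟨C, hC, hCF⟩ := hF.exists_pos
  obtain ⟨ρ, hρ, hρF⟩ := Metric.eventually_nhds_iff.1 hCF.bound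
  rw [tendstoInMeasure_iff_dist] at hf ⊢
  intro ε hε
  set η := min (ε / C) (ρ ^ 2)
  have hη : 0 < η := lt_min (div_pos hε hC) (pow_pos hρ 2)
  refine tendsto_of_tendsto_of_tendsto_of_le_of_le' tendsto_const_nhds (hf η hη)
    (Eventually.of_forall fun n => bot_le) ?_
  filter_upwards [ha] with n hn
  refine measure_mono fun ω hω => ?_
  have ha0 : 0 ≤ a n := zero_le_one.trans hn
  simp only [Set.mem_ofPred_eq, dist_zero_right, norm_mul, norm_pow, Real.norm_eq_abs, abs_norm,
    abs_of_nonneg ha0] at hω ⊢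
  by_contra! hsmall
  have hball : dist (f n ω) p < ρ := by
    rw [dist_eq_norm]
    refine lt_of_pow_lt_pow_left₀ 2 hρ.le ?_
    nlinarith [min_le_right (ε / C) (ρ ^ 2), sq_nonneg ‖f n ω - p‖]
  have hFle := hρF hball
  rw [norm_pow, norm_norm, Real.norm_eq_abs] at hFle
  have : a n * |F (f n ω)| < ε :=
    calc a n * |F (f n ω)| ≤ a n * (C * ‖f n ω - p‖ ^ 2) := mul_le_mul_of_nonneg_left hFle ha0
      _ = C * (a n * ‖f n ω - p‖ ^ 2) := by ring
      _ < C * η := mul_lt_mul_of_pos_left hsmall hC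
      _ ≤ C * (ε / C) := mul_le_mul_of_nonneg_left (min_le_left _ _) hC.le
      _ = ε := mul_div_cancel₀ ε hC.ne'
  linarith

section Frequency

variable {Ω : Type*} [MeasurableSpace Ω] {μ : Measure Ω} [IsProbabilityMeasure μ]

lemma meas_abs_avg_sub_ge_le {X : ℕ → Ω → ℝ} (hX : ∀ k, Measurable (X k))
    (hindep : iIndepFun X μ) (hX01 : ∀ k ω, X k ω ∈ Set.Icc 0 1) {θ : ℝ}
    (hmean : ∀ k, μ[X k] = θ) {n : ℕ} (hn : 0 < n) {δ : ℝ} (hδ : 0 < δ) :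
    μ {ω | δ ≤ |(∑ k ∈ range n, X k ω) / n - θ|} ≤ ENNReal.ofReal (1 / (4 * n * δ ^ 2)) := by
  have hmem : ∀ k, MemLp (X k) 2 μ := fun k =>
    MemLp.of_bound (hX k).aestronglyMeasurable 1 (Eventually.of_forall fun ω => by
      simpa [abs_of_nonneg (hX01 k ω).1] using (hX01 k ω).2)
  set S := ∑ k ∈ range n, X k
  have hS : ∀ ω, S ω = ∑ k ∈ range n, X k ω := fun ω => Finset.sum_apply ..
  have hvar : variance S μ ≤ n / 4 :=
    calc variance S μ = ∑ k ∈ range n, variance (X k) μ :=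
          IndepFun.variance_sum (fun k _ => hmem k) fun k _ k' _ hkk' => hindep.indepFun hkk'
      _ ≤ ∑ _k ∈ range n, ((1 - 0) / 2 : ℝ) ^ 2 := sum_le_sum fun k _ =>
          variance_le_sq_of_bounded (Eventually.of_forall (hX01 k)) (hX k).aemeasurable
      _ = n / 4 := by simp; ring
  have hES : μ[S] = n * θ := by
    simp only [hS]
    rw [integral_finsetSum _ fun k _ => (hmem k).integrable one_le_two]
    simp [hmean]
  have hsub : {ω | δ ≤ |(∑ k ∈ range n, X k ω) / n - θ|} ⊆ {ω | n * δ ≤ |S ω - μ[S]|} := by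
    intro ω hω
    have hn' : (0 : ℝ) < n := Nat.cast_pos.2 hn
    show n * δ ≤ |S ω - μ[S]|
    rw [hES, hS, show ∑ k ∈ range n, X k ω - n * θ
        = n * ((∑ k ∈ range n, X k ω) / n - θ) by field_simp, abs_mul, abs_of_pos hn']
    exact mul_le_mul_of_nonneg_left hω hn'.le
  calc _ ≤ μ {ω | n * δ ≤ |S ω - μ[S]|} := measure_mono hsub
    _ ≤ ENNReal.ofReal (variance S μ / (n * δ) ^ 2) :=
        meas_ge_le_variance_div_sq (memLp_finsetSum' _ fun k _ => hmem k) (by positivity)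
    _ ≤ ENNReal.ofReal (n / 4 / (n * δ) ^ 2) := by gcongr
    _ = _ := by
        congr 1
        field_simp

lemma meas_abs_freq_sub_ge_le {α : Type*} [MeasurableSpace α] [MeasurableSingletonClass α]
    [DecidableEq α] {W : ℕ → Ω → α} (hmeas : ∀ k, Measurable (W k)) (hindep : iIndepFun W μ)
    {a : α} {θ : ℝ} (hθ : 0 ≤ θ) (hdist : ∀ k, μ {ω | W k ω = a} = ENNReal.ofReal θ)
    {n : ℕ} (hn : 0 < n) {δ : ℝ} (hδ : 0 < δ) :
    μ {ω | δ ≤ |(#{k ∈ range n | W k ω = a} : ℝ) / n - θ|}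
      ≤ ENNReal.ofReal (1 / (4 * n * δ ^ 2)) := by
  set f : α → ℝ := fun x => if x = a then 1 else 0
  have hf : Measurable f :=
    Measurable.ite (measurableSet_singleton a) measurable_const measurable_const
  have hmean : ∀ k, μ[f ∘ W k] = θ := fun k =>
    calc μ[f ∘ W k] = ∫ ω, {ω | W k ω = a}.indicator 1 ω ∂μ := by
          congr 1; funext ω; simp [f, Set.indicator_apply]
      _ = θ := by
          rw [integral_indicator_one (s := {ω | W k ω = a})
              ((hmeas k) (measurableSet_singleton a)),
            measureReal_def, hdist k, ENNReal.toReal_ofReal hθ]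
  have hcount : ∀ ω, (#{k ∈ range n | W k ω = a} : ℝ) = ∑ k ∈ range n, (f ∘ W k) ω := by
    simp [f, sum_boole]
  simp only [hcount]
  exact meas_abs_avg_sub_ge_le (fun k => hf.comp (hmeas k))
    (hindep.comp (fun _ => f) fun _ => hf)
    (fun k ω => by simp only [Function.comp_apply, f]; split_ifs <;> simp) hmean hn hδ

end Frequency

section Empirical

variable {Ω : Type*} [MeasurableSpace Ω] {μ : Measure Ω} [IsProbabilityMeasure μ] {I J : ℕ}
  {W : ℕ → Ω → Fin I × Fin J} {p : Fin I → Fin J → ℝ}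

lemma meas_norm_emp_sub_ge_le (hmeas : ∀ k, Measurable (W k)) (hindep : iIndepFun W μ)
    (hp0 : ∀ i j, 0 ≤ p i j) (hdist : ∀ k i j, μ {ω | W k ω = (i, j)} = ENNReal.ofReal (p i j))
    {n : ℕ} (hn : 0 < n) {δ : ℝ} (hδ : 0 < δ) :
    μ {ω | δ ≤ ‖emp W n ω - p‖} ≤ ENNReal.ofReal (I * J / (4 * n * δ ^ 2)) := by
  have hsub : {ω | δ ≤ ‖emp W n ω - p‖}
      ⊆ ⋃ x : Fin I × Fin J, {ω | δ ≤ |emp W n ω x.1 x.2 - p x.1 x.2|} := by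
    intro ω hω
    by_contra h
    simp only [Set.mem_iUnion, not_exists, Set.mem_ofPred_eq, not_le] at h
    refine not_le.2 ((pi_norm_lt_iff hδ).2 fun i => (pi_norm_lt_iff hδ).2 fun j => ?_) hω
    simpa using h (i, j)
  calc _ ≤ μ (⋃ x : Fin I × Fin J, {ω | δ ≤ |emp W n ω x.1 x.2 - p x.1 x.2|}) :=
        measure_mono hsub
    _ ≤ ∑ x : Fin I × Fin J, μ {ω | δ ≤ |emp W n ω x.1 x.2 - p x.1 x.2|} :=
        measure_iUnion_fintype_le _ _
    _ ≤ ∑ _x : Fin I × Fin J, ENNReal.ofReal (1 / (4 * n * δ ^ 2)) := sum_le_sum fun x _ =>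
        meas_abs_freq_sub_ge_le hmeas hindep (hp0 x.1 x.2) (fun k => hdist k x.1 x.2) hn hδ
    _ = _ := by
        rw [sum_const, card_univ, Fintype.card_prod, Fintype.card_fin, Fintype.card_fin,
          nsmul_eq_mul, ← ENNReal.ofReal_natCast, ← ENNReal.ofReal_mul (by positivity)]
        congr 1
        push_cast
        ring

lemma tendstoInMeasure_sqrt_mul_norm_emp_sub_sq (hmeas : ∀ k, Measurable (W k))
    (hindep : iIndepFun W μ) (hp0 : ∀ i j, 0 ≤ p i j)
    (hdist : ∀ k i j, μ {ω | W k ω = (i, j)} = ENNReal.ofReal (p i j)) :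
    TendstoInMeasure μ (fun (n : ℕ) ω => √(n : ℝ) * ‖emp W n ω - p‖ ^ 2) atTop fun _ => 0 := by
  rw [tendstoInMeasure_iff_dist]
  intro ε hε
  have hbound : ∀ n : ℕ, 0 < n → μ {ω | ε ≤ dist (√n * ‖emp W n ω - p‖ ^ 2) 0}
      ≤ ENNReal.ofReal (I * J / (4 * ε) / √n) := by
    intro n hn
    have hsn : 0 < √(n : ℝ) := sqrt_pos.2 (Nat.cast_pos.2 hn)
    have hsub : {ω | ε ≤ dist (√n * ‖emp W n ω - p‖ ^ 2) 0}
        ⊆ {ω | √(ε / √n) ≤ ‖emp W n ω - p‖} := by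
      intro ω hω
      simp only [Set.mem_ofPred_eq, dist_zero_right, norm_mul, norm_pow, norm_norm,
        norm_of_nonneg hsn.le] at hω ⊢
      rw [← sqrt_sq (norm_nonneg (emp W n ω - p))]
      exact sqrt_le_sqrt ((div_le_iff₀' hsn).2 hω)
    calc _ ≤ μ {ω | √(ε / √n) ≤ ‖emp W n ω - p‖} := measure_mono hsub
      _ ≤ ENNReal.ofReal (I * J / (4 * n * √(ε / √n) ^ 2)) :=
          meas_norm_emp_sub_ge_le hmeas hindep hp0 hdist hn (sqrt_pos.2 (div_pos hε hsn))
      _ = _ := by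
          rw [sq_sqrt (div_pos hε hsn).le]
          congr 1
          field_simp
          rw [sq_sqrt (Nat.cast_nonneg n)]
  have hlim : Tendsto (fun n : ℕ => ENNReal.ofReal (I * J / (4 * ε) / √n)) atTop (𝓝 0) := by
    simpa using ENNReal.tendsto_ofReal
      (tendsto_const_nhds.div_atTop (tendsto_sqrt_atTop.comp tendsto_natCast_atTop_atTop))
  exact tendsto_of_tendsto_of_tendsto_of_le_of_le' tendsto_const_nhds hlim
    (Eventually.of_forall fun n => bot_le) ((eventually_gt_atTop 0).mono hbound)

end Empirical

theorem sqrt_n_TA_add_TB_tendsto_zero_general {I J : ℕ} (l : ℝ)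
    (p : Fin I → Fin J → ℝ) (hp : IsJointDist p) (hpos : ∀ i j, 0 < p i j)
    (hind : IndepDist p)
    {Ω : Type*} [MeasurableSpace Ω] (μ : MeasureTheory.Measure Ω)
    [MeasureTheory.IsProbabilityMeasure μ]
    (W : ℕ → Ω → Fin I × Fin J) (hmeas : ∀ k, Measurable (W k))
    (hindep : iIndepFun W μ)
    (hdist : ∀ k i j, μ {ω | W k ω = (i, j)} = ENNReal.ofReal (p i j)) :
    MeasureTheory.TendstoInMeasure μ
      (fun (n : ℕ) ω => Real.sqrt n * (TA l (emp W n ω) + TB l (emp W n ω))) atTop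
      (fun _ => (0 : ℝ)) := by
  have := hp.nonempty
  have hsqrt : ∀ᶠ n : ℕ in atTop, 1 ≤ √(n : ℝ) :=
    (eventually_ge_atTop 1).mono fun n hn => one_le_sqrt.2 (Nat.one_le_cast.2 hn)
  exact TendstoInMeasure.mul_comp_of_isBigO_sq (F := fun q => TA l q + TB l q)
    (f := fun n ω => emp W n ω) hsqrt (TA_add_TB_isBigO hpos hind)
    (tendstoInMeasure_sqrt_mul_norm_emp_sub_sq hmeas hindep (fun i j => (hpos i j).le) hdist)

/-- Under independence, `√n (T̂_A + T̂_B)` converges to `0` in probability. -/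
theorem sqrt_n_TA_add_TB_tendsto_zero {I J : ℕ} (l : ℝ) (hl : 0 < l)
    (p : Fin I → Fin J → ℝ) (hp : IsJointDist p) (hpos : ∀ i j, 0 < p i j)
    (hind : IndepDist p)
    {Ω : Type*} [MeasurableSpace Ω] (μ : MeasureTheory.Measure Ω)
    [MeasureTheory.IsProbabilityMeasure μ]
    (W : ℕ → Ω → Fin I × Fin J) (hmeas : ∀ k, Measurable (W k))
    (hindep : iIndepFun W μ)
    (hdist : ∀ k i j, μ {ω | W k ω = (i, j)} = ENNReal.ofReal (p i j)) :
    MeasureTheory.TendstoInMeasure μ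
      (fun (n : ℕ) ω => Real.sqrt n * (TA l (emp W n ω) + TB l (emp W n ω))) atTop
      (fun _ => (0 : ℝ)) :=
  sqrt_n_TA_add_TB_tendsto_zero_general l p hp hpos hind μ W hmeas hindep hdist

end
end

section
/- Suppose all p_{i,j} > 0, p_{i,j} = p_{i·} p_{·j} for all i, j (the hypothesis of independence), neither marginal distribution (p_{i·}) nor (p_{·j}) is uniform, and λ ∈ (0,1) ∪ (1,∞). Then the delta-method variance σ² = ∇ᵀ Σ(v) ∇ is strictly positive. -/
open MeasureTheory ProbabilityTheory Real Finset Filter Topology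

noncomputable section

/-! Write `F x = ∑ₖ mlog (x_k^λ / ∑ x^λ)` for a positive vector `x`, so that
`T_A = F(p) - F(row p) - F(col p)`. The gradient of `F` is `λ² S_x`, with the escort score
`S_x(k) = α_x(k) (log x_k - E*[log x])`, `α_x(k) = x_k^(λ-1) / ∑ x^λ` and `E*` the escort mean.
Hence the derivative of `T_A` along the free coordinate `s` is `g(s) - g(I, J)`, where `g` is the
gradient of `T_A` in all `IJ` cells, and `σ²` is the variance of `g` under `p`: it is positive as
soon as `g` is not constant.

Under independence the joint escort is the product of the marginal escorts, and
`g(i, j) = λ² (S_ρ(i) (α_γ(j) - 1) + S_γ(j) (α_ρ(i) - 1))`. If `g` were constant, averaging it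
against `p` shows the constant is `0`; then `S_ρ = c (α_ρ - 1)` and `S_γ = -c (α_γ - 1)`. The first
identity says `t ↦ log t + c (∑ ρ^λ) t^(1-λ)` takes the same value at two distinct row
probabilities, so by Rolle `c (1 - λ) < 0`; the columns give `-c (1 - λ) < 0` in the same way. -/

lemma mul_one_sub_neg_of_log_add_mul_rpow_eq {l K a b : ℝ} (ha : 0 < a) (hb : 0 < b) (hab : a ≠ b)
    (heq : Real.log a + K * a ^ (1 - l) = Real.log b + K * b ^ (1 - l)) : K * (1 - l) < 0 := by
  wlog hlt : a < b generalizing a b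
  · exact this hb ha hab.symm heq.symm (hab.symm.lt_of_le (not_lt.1 hlt))
  have hderiv : ∀ t : ℝ, 0 < t → HasDerivAt (fun t => Real.log t + K * t ^ (1 - l))
      (t⁻¹ + K * ((1 - l) * t ^ (1 - l - 1))) t := fun t ht =>
    (Real.hasDerivAt_log ht.ne').add ((Real.hasDerivAt_rpow_const (Or.inl ht.ne')).const_mul K)
  obtain ⟨ξ, hξ, hzero⟩ := exists_hasDerivAt_eq_zero hlt
    (fun t ht => (hderiv t (ha.trans_le ht.1)).continuousAt.continuousWithinAt) heq
    (fun t ht => hderiv t (ha.trans ht.1))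
  have hξ0 : 0 < ξ := ha.trans hξ.1
  have hpow : ξ ^ (1 - l - 1) * ξ ^ l = 1 := by
    rw [← Real.rpow_add hξ0]
    norm_num
  have hK : K * (1 - l) = -(ξ⁻¹ * ξ ^ l) := by
    linear_combination ξ ^ l * hzero - K * (1 - l) * hpow
  rw [hK, neg_lt_zero]
  exact mul_pos (inv_pos.2 hξ0) (Real.rpow_pos_of_pos hξ0 l)

lemma sum_mul_ite_sub_ite {α : Type*} [Fintype α] [DecidableEq α] (f : α → ℝ) (a b : α) :
    ∑ x, f x * ((if x = a then 1 else 0) - if x = b then 1 else 0) = f a - f b := by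
  simp [mul_sub, Finset.sum_sub_distrib]

theorem multinomial_quadForm_pos {κ : Type*} [Fintype κ] [DecidableEq κ] {w G : κ → ℝ}
    (hw : ∀ s, 0 < w s) (hsum : ∑ s, w s < 1) (hG : ∃ s, G s ≠ 0) :
    0 < ∑ s, ∑ t, G s * ((if s = t then w s else 0) - w s * w t) * G t := by
  have hform : ∑ s, ∑ t, G s * ((if s = t then w s else 0) - w s * w t) * G t
      = ∑ s, w s * G s ^ 2 - (∑ s, w s * G s) ^ 2 := by
    simp only [mul_sub, sub_mul, Finset.sum_sub_distrib, mul_ite, ite_mul, mul_zero, zero_mul,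
      Finset.sum_ite_eq, Finset.mem_univ, if_true, sq, Finset.sum_mul_sum]
    congr 1
    · exact Finset.sum_congr rfl fun s _ => by ring
    · exact Finset.sum_congr rfl fun s _ => Finset.sum_congr rfl fun t _ => by ring
  have hCS : (∑ s, w s * G s) ^ 2 ≤ (∑ s, w s) * ∑ s, w s * G s ^ 2 :=
    Finset.sum_sq_le_sum_mul_sum_of_sq_le_mul _ (fun s _ => (hw s).le)
      (fun s _ => mul_nonneg (hw s).le (sq_nonneg _)) (fun s _ => le_of_eq (by ring))
  obtain ⟨s0, hs0⟩ := hG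
  have hvar : 0 < ∑ s, w s * G s ^ 2 :=
    Finset.sum_pos' (fun s _ => mul_nonneg (hw s).le (sq_nonneg _))
      ⟨s0, Finset.mem_univ _, mul_pos (hw s0) (sq_pos_of_ne_zero hs0)⟩
  rw [hform]
  linarith [mul_lt_mul_of_pos_right hsum hvar]

section Escort

variable {ι : Type*} [Fintype ι] (l : ℝ)

def escortNegEntropy (x : ι → ℝ) : ℝ := ∑ k, mlog (x k ^ l / ∑ k', x k' ^ l)

def escortMean (x : ι → ℝ) : ℝ := (∑ k, x k ^ l * Real.log (x k)) / ∑ k, x k ^ l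

def escortRatio (x : ι → ℝ) (i : ι) : ℝ := x i ^ (l - 1) / ∑ k, x k ^ l

def escortScore (x : ι → ℝ) (i : ι) : ℝ := escortRatio l x i * (Real.log (x i) - escortMean l x)

variable {l} {x : ι → ℝ}

lemma sum_rpow_pos [Nonempty ι] (hx : ∀ k, 0 < x k) : 0 < ∑ k, x k ^ l :=
  Finset.sum_pos (fun k _ => Real.rpow_pos_of_pos (hx k) l) Finset.univ_nonempty

lemma escortNegEntropy_eq [Nonempty ι] (hx : ∀ k, 0 < x k) :
    escortNegEntropy l x = l * escortMean l x - Real.log (∑ k, x k ^ l) := by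
  have hC := sum_rpow_pos (l := l) hx
  have hterm : ∀ k, mlog (x k ^ l / ∑ k', x k' ^ l)
      = (l * (x k ^ l * Real.log (x k)) - x k ^ l * Real.log (∑ k', x k' ^ l))
        / ∑ k', x k' ^ l := by
    intro k
    rw [mlog, Real.log_div (Real.rpow_pos_of_pos (hx k) l).ne' hC.ne', Real.log_rpow (hx k)]
    ring
  rw [escortNegEntropy, escortMean, Finset.sum_congr rfl fun k _ => hterm k, ← Finset.sum_div,
    Finset.sum_sub_distrib, ← Finset.mul_sum, ← Finset.sum_mul]
  field_simp

lemma hasFDerivAt_escortNegEntropy [Nonempty ι] (hx : ∀ k, 0 < x k) :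
    HasFDerivAt (escortNegEntropy l)
      (∑ k, (l ^ 2 * escortScore l x k) •
        ContinuousLinearMap.proj (R := ℝ) (φ := fun _ : ι => ℝ) k) x := by
  have hpow : ∀ k, HasFDerivAt (fun y : ι → ℝ => y k ^ l)
      ((l * x k ^ (l - 1)) • ContinuousLinearMap.proj k) x := fun k =>
    (hasFDerivAt_apply (𝕜 := ℝ) k x).rpow_const (Or.inl (hx k).ne')
  have hC := (HasFDerivAt.fun_sum (u := Finset.univ) fun k _ => hpow k)
  have hS := HasFDerivAt.fun_sum (u := Finset.univ) fun k _ =>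
    (hpow k).fun_mul ((hasFDerivAt_apply (𝕜 := ℝ) k x).log (hx k).ne')
  have hinv := (hasDerivAt_inv (sum_rpow_pos (l := l) hx).ne').comp_hasFDerivAt x hC
  have hclosed := ((hS.const_mul l).fun_mul hinv).fun_sub (hC.log (sum_rpow_pos hx).ne')
  have hev : escortNegEntropy l =ᶠ[nhds x] fun y =>
      l * (∑ k, y k ^ l * Real.log (y k)) * (∑ k, y k ^ l)⁻¹ - Real.log (∑ k, y k ^ l) := by
    have hopen : ∀ᶠ y in nhds x, ∀ k, 0 < y k :=
      Filter.eventually_all.2 fun k =>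
        (continuous_apply k).continuousAt.eventually (lt_mem_nhds (hx k))
    filter_upwards [hopen] with y hy
    rw [escortNegEntropy_eq hy, escortMean]
    ring
  refine (hclosed.congr_of_eventuallyEq hev).congr_fderiv ?_
  ext h
  have hC0 := (sum_rpow_pos (l := l) hx).ne'
  simp only [FunLike.coe_sum, Finset.sum_apply, FunLike.coe_smul, Pi.smul_apply, FunLike.coe_sub,
    Pi.sub_apply, FunLike.coe_add, Pi.add_apply, ContinuousLinearMap.proj_apply,
    Function.comp_apply, smul_eq_mul, escortScore, escortRatio, escortMean]
  generalize ∑ k, x k ^ l = C at hC0 ⊢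
  generalize ∑ k, x k ^ l * Real.log (x k) = S
  simp only [Finset.mul_sum, ← Finset.sum_add_distrib, ← Finset.sum_sub_distrib]
  refine Finset.sum_congr rfl fun k _ => ?_
  rw [Real.rpow_sub_one (hx k).ne']
  field_simp
  ring

lemma sum_mul_escortScore [Nonempty ι] (hx : ∀ k, 0 < x k) : ∑ i, x i * escortScore l x i = 0 := by
  have hC0 := (sum_rpow_pos (l := l) hx).ne'
  have hterm : ∀ i, x i * escortScore l x i
      = (x i ^ l * Real.log (x i) - x i ^ l * escortMean l x) / ∑ k, x k ^ l := fun i => by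
    have := (hx i).ne'
    rw [escortScore, escortRatio, Real.rpow_sub_one this]
    field_simp
  rw [Finset.sum_congr rfl fun i _ => hterm i, ← Finset.sum_div, Finset.sum_sub_distrib,
    ← Finset.sum_mul, escortMean]
  field_simp
  ring

lemma exists_escortRatio_ne_one (hl1 : l ≠ 1) (hx : ∀ k, 0 < x k) (hnc : ¬ ∀ i i', x i = x i') :
    ∃ i, escortRatio l x i ≠ 1 := by
  by_contra! h
  apply hnc
  have : Nonempty ι := ⟨(not_forall.1 hnc).choose⟩
  have hC0 := (sum_rpow_pos (l := l) hx).ne'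
  have hpow : ∀ i, x i ^ (l - 1) = ∑ k, x k ^ l := fun i => by
    simpa [escortRatio, div_eq_one_iff_eq hC0] using h i
  intro i i'
  have hl1' : l - 1 ≠ 0 := sub_ne_zero.2 hl1
  calc x i = (x i ^ (l - 1)) ^ (l - 1)⁻¹ := by
        rw [← Real.rpow_mul (hx i).le, mul_inv_cancel₀ hl1', Real.rpow_one]
    _ = (x i' ^ (l - 1)) ^ (l - 1)⁻¹ := by rw [hpow i, hpow i']
    _ = x i' := by rw [← Real.rpow_mul (hx i').le, mul_inv_cancel₀ hl1', Real.rpow_one]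

lemma log_add_mul_rpow_eq_of_escortScore_eq [Nonempty ι] (hx : ∀ k, 0 < x k) {c : ℝ} {i : ι}
    (h : escortScore l x i = c * (escortRatio l x i - 1)) :
    Real.log (x i) + c * (∑ k, x k ^ l) * x i ^ (1 - l) = escortMean l x + c := by
  have hC0 := (sum_rpow_pos (l := l) hx).ne'
  have hinv : escortRatio l x i * ((∑ k, x k ^ l) * x i ^ (1 - l)) = 1 := by
    rw [escortRatio, show 1 - l = -(l - 1) by ring, Real.rpow_neg (hx i).le]
    field_simp [(Real.rpow_pos_of_pos (hx i) (l - 1)).ne']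
  rw [escortScore] at h
  linear_combination ((∑ k, x k ^ l) * x i ^ (1 - l)) * h
    + (c + escortMean l x - Real.log (x i)) * hinv

lemma mul_one_sub_neg_of_escortScore_eq (hx : ∀ k, 0 < x k) (hnc : ¬ ∀ i i', x i = x i')
    {c : ℝ} (h : ∀ i, escortScore l x i = c * (escortRatio l x i - 1)) : c * (1 - l) < 0 := by
  push Not at hnc
  obtain ⟨i, i', hne⟩ := hnc
  have : Nonempty ι := ⟨i⟩
  have hK := mul_one_sub_neg_of_log_add_mul_rpow_eq (hx i) (hx i') hne
    (by rw [log_add_mul_rpow_eq_of_escortScore_eq hx (h i),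
      log_add_mul_rpow_eq_of_escortScore_eq hx (h i')])
  exact neg_of_mul_neg_right (by linarith [hK] : (∑ k, x k ^ l) * (c * (1 - l)) < 0)
    (sum_rpow_pos hx).le

end Escort

section Product

variable {ι κ : Type*} [Fintype ι] [Fintype κ] {l : ℝ} {x : ι → ℝ} {y : κ → ℝ}

lemma sum_mul_rpow_prod (hx : ∀ i, 0 ≤ x i) (hy : ∀ j, 0 ≤ y j) :
    ∑ k : ι × κ, (x k.1 * y k.2) ^ l = (∑ i, x i ^ l) * ∑ j, y j ^ l := by
  rw [Fintype.sum_prod_type, Finset.sum_mul_sum]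
  exact Finset.sum_congr rfl fun i _ => Finset.sum_congr rfl fun j _ => Real.mul_rpow (hx i) (hy j)

lemma escortRatio_mul (hx : ∀ i, 0 ≤ x i) (hy : ∀ j, 0 ≤ y j) (i : ι) (j : κ) :
    escortRatio l (fun k : ι × κ => x k.1 * y k.2) (i, j)
      = escortRatio l x i * escortRatio l y j := by
  rw [escortRatio, escortRatio, escortRatio, sum_mul_rpow_prod hx hy, Real.mul_rpow (hx i) (hy j),
    mul_div_mul_comm]

lemma escortMean_mul [Nonempty ι] [Nonempty κ] (hx : ∀ i, 0 < x i) (hy : ∀ j, 0 < y j) :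
    escortMean l (fun k : ι × κ => x k.1 * y k.2) = escortMean l x + escortMean l y := by
  have hS : ∑ k : ι × κ, (x k.1 * y k.2) ^ l * Real.log (x k.1 * y k.2)
      = (∑ i, x i ^ l * Real.log (x i)) * (∑ j, y j ^ l)
        + (∑ i, x i ^ l) * ∑ j, y j ^ l * Real.log (y j) := by
    rw [Fintype.sum_prod_type, Finset.sum_mul_sum, Finset.sum_mul_sum, ← Finset.sum_add_distrib]
    refine Finset.sum_congr rfl fun i _ => ?_
    rw [← Finset.sum_add_distrib]
    refine Finset.sum_congr rfl fun j _ => ?_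
    rw [Real.mul_rpow (hx i).le (hy j).le, Real.log_mul (hx i).ne' (hy j).ne']
    ring
  have hCx := (sum_rpow_pos (l := l) hx).ne'
  have hCy := (sum_rpow_pos (l := l) hy).ne'
  rw [escortMean, escortMean, escortMean, hS, sum_mul_rpow_prod (fun i => (hx i).le)
    (fun j => (hy j).le)]
  field_simp

lemma escortScore_mul (hx : ∀ i, 0 < x i) (hy : ∀ j, 0 < y j) (i : ι) (j : κ) :
    escortScore l (fun k : ι × κ => x k.1 * y k.2) (i, j)
      = escortRatio l y j * escortScore l x i + escortRatio l x i * escortScore l y j := by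
  have : Nonempty ι := ⟨i⟩
  have : Nonempty κ := ⟨j⟩
  rw [escortScore, escortRatio_mul (fun i => (hx i).le) (fun j => (hy j).le), escortMean_mul hx hy,
    Real.log_mul (hx i).ne' (hy j).ne', escortScore, escortScore]
  ring

lemma sum_mul_mul_escortScore_cross [Nonempty ι] [Nonempty κ] (hx : ∀ i, 0 < x i)
    (hy : ∀ j, 0 < y j) :
    ∑ i, ∑ j, x i * y j * (escortScore l x i * (escortRatio l y j - 1)
      + escortScore l y j * (escortRatio l x i - 1)) = 0 := by
  have hsplit : ∑ i, ∑ j, x i * y j * (escortScore l x i * (escortRatio l y j - 1)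
        + escortScore l y j * (escortRatio l x i - 1))
      = (∑ i, x i * escortScore l x i) * (∑ j, y j * (escortRatio l y j - 1))
        + (∑ i, x i * (escortRatio l x i - 1)) * ∑ j, y j * escortScore l y j := by
    rw [Finset.sum_mul_sum, Finset.sum_mul_sum, ← Finset.sum_add_distrib]
    refine Finset.sum_congr rfl fun i _ => ?_
    rw [← Finset.sum_add_distrib]
    exact Finset.sum_congr rfl fun j _ => by ring
  rw [hsplit, sum_mul_escortScore hx, sum_mul_escortScore hy, zero_mul, mul_zero, add_zero]

theorem exists_escortScore_cross_ne (hl1 : l ≠ 1) (hx : ∀ i, 0 < x i) (hy : ∀ j, 0 < y j)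
    (hxnc : ¬ ∀ i i', x i = x i') (hync : ¬ ∀ j j', y j = y j') (K : ℝ) :
    ∃ i j, escortScore l x i * (escortRatio l y j - 1)
      + escortScore l y j * (escortRatio l x i - 1) ≠ K := by
  by_contra! hK
  obtain ⟨a, ha⟩ := exists_escortRatio_ne_one hl1 hx hxnc
  obtain ⟨b, hb⟩ := exists_escortRatio_ne_one hl1 hy hync
  have : Nonempty ι := ⟨a⟩
  have : Nonempty κ := ⟨b⟩
  have hK0 : K = 0 := by
    have h := sum_mul_mul_escortScore_cross (l := l) hx hy
    simp only [hK, ← Finset.sum_mul, ← Finset.mul_sum] at h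
    have hxs : 0 < ∑ i, x i := Finset.sum_pos (fun i _ => hx i) Finset.univ_nonempty
    have hys : 0 < ∑ j, y j := Finset.sum_pos (fun j _ => hy j) Finset.univ_nonempty
    simpa [hxs.ne', hys.ne'] using h
  have hb' : escortRatio l y b - 1 ≠ 0 := sub_ne_zero.2 hb
  have ha' : escortRatio l x a - 1 ≠ 0 := sub_ne_zero.2 ha
  set c := -escortScore l y b / (escortRatio l y b - 1)
  have hc : c * (escortRatio l y b - 1) = -escortScore l y b := div_mul_cancel₀ _ hb'
  have hxc : ∀ i, escortScore l x i = c * (escortRatio l x i - 1) := fun i => by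
    have := hK i b
    rw [hK0] at this
    refine mul_right_cancel₀ hb' ?_
    linear_combination this - (escortRatio l x i - 1) * hc
  have hyc : ∀ j, escortScore l y j = -c * (escortRatio l y j - 1) := fun j => by
    have := hK a j
    rw [hK0, hxc a] at this
    refine mul_left_cancel₀ ha' ?_
    linear_combination this
  linarith [mul_one_sub_neg_of_escortScore_eq hx hxnc hxc,
    mul_one_sub_neg_of_escortScore_eq hy hync hyc]

end Product

lemma TA_eq {I J : ℕ} (l : ℝ) (P : Fin I → Fin J → ℝ) :
    TA l P = escortNegEntropy l (fun k : Fin I × Fin J => P k.1 k.2)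
      - escortNegEntropy l (rowM P) - escortNegEntropy l (colM P) := by
  simp only [TA, escortNegEntropy, pStar, cLam, qEsc, rEsc, Fintype.sum_prod_type]

lemma rowM_pos {I J : ℕ} [NeZero J] {p : Fin I → Fin J → ℝ} (hpos : ∀ i j, 0 < p i j) (i : Fin I) :
    0 < rowM p i :=
  Finset.sum_pos (fun j _ => hpos i j) Finset.univ_nonempty

lemma colM_pos {I J : ℕ} [NeZero I] {p : Fin I → Fin J → ℝ} (hpos : ∀ i j, 0 < p i j) (j : Fin J) :
    0 < colM p j :=
  Finset.sum_pos (fun i _ => hpos i j) Finset.univ_nonempty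

section Fill

variable {I J : ℕ}

def fillDeriv (i : Fin (I + 1)) (j : Fin (J + 1)) : (VIdx I J → ℝ) →L[ℝ] ℝ :=
  if h : (i, j) = (Fin.last I, Fin.last J) then -∑ s, ContinuousLinearMap.proj s
  else ContinuousLinearMap.proj ⟨(i, j), h⟩

lemma hasFDerivAt_fill_apply (i : Fin (I + 1)) (j : Fin (J + 1)) (v : VIdx I J → ℝ) :
    HasFDerivAt (fun w : VIdx I J → ℝ => fill w i j) (fillDeriv i j) v := by
  unfold fill fillDeriv
  split_ifs with h
  · exact ((hasFDerivAt_const (1 : ℝ) v).fun_sub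
      (HasFDerivAt.fun_sum fun s _ => hasFDerivAt_apply (𝕜 := ℝ) s v)).congr_fderiv (zero_sub _)
  · exact hasFDerivAt_apply _ v

lemma fillDeriv_single (i : Fin (I + 1)) (j : Fin (J + 1)) (s : VIdx I J) :
    fillDeriv i j (Pi.single s 1)
      = (if (i, j) = s.1 then 1 else 0) - if (i, j) = (Fin.last I, Fin.last J) then 1 else 0 := by
  unfold fillDeriv
  by_cases h : (i, j) = (Fin.last I, Fin.last J)
  · have hs : (Fin.last I, Fin.last J) ≠ s.1 := fun h' => s.2 h'.symm
    simp [h, hs, Pi.single_apply]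
  · simp [h, Pi.single_apply, Subtype.ext_iff]

lemma sum_VIdx_add_last (f : Fin (I + 1) × Fin (J + 1) → ℝ) :
    ∑ t : VIdx I J, f t.1 + f (Fin.last I, Fin.last J) = ∑ k, f k := by
  rw [← Finset.sum_subtype (Finset.univ.erase (Fin.last I, Fin.last J)) (by simp) f]
  exact Finset.sum_erase_add _ _ (Finset.mem_univ _)

lemma fill_of_sum_eq_one {p : Fin (I + 1) → Fin (J + 1) → ℝ} (hsum : ∑ i, ∑ j, p i j = 1) :
    fill (fun t : VIdx I J => p t.1.1 t.1.2) = p := by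
  funext i j
  unfold fill
  split_ifs with h
  · have := sum_VIdx_add_last fun k => p k.1 k.2
    rw [Fintype.sum_prod_type, hsum] at this
    obtain ⟨rfl, rfl⟩ := Prod.ext_iff.1 h
    linarith
  · rfl

end Fill

def fullGradTA {I J : ℕ} (l : ℝ) (p : Fin I → Fin J → ℝ) (i : Fin I) (j : Fin J) : ℝ :=
  l ^ 2 * (escortScore l (fun k : Fin I × Fin J => p k.1 k.2) (i, j)
    - escortScore l (rowM p) i - escortScore l (colM p) j)

section Gradient

variable {I J : ℕ} {l : ℝ} {p : Fin (I + 1) → Fin (J + 1) → ℝ}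

lemma gradTA_eq (hpos : ∀ i j, 0 < p i j) (hsum : ∑ i, ∑ j, p i j = 1) (s : VIdx I J) :
    gradTA l p s = fullGradTA l p s.1.1 s.1.2 - fullGradTA l p (Fin.last I) (Fin.last J) := by
  set v : VIdx I J → ℝ := fun t => p t.1.1 t.1.2
  have hfill : fill v = p := fill_of_sum_eq_one hsum
  have hcell : HasFDerivAt (fun w (k : Fin (I + 1) × Fin (J + 1)) => fill w k.1 k.2)
      (ContinuousLinearMap.pi fun k => fillDeriv k.1 k.2) v :=
    hasFDerivAt_pi.2 fun k => hasFDerivAt_fill_apply k.1 k.2 v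
  have hrow : HasFDerivAt (fun w => rowM (fill w))
      (ContinuousLinearMap.pi fun i => ∑ j, fillDeriv i j) v :=
    hasFDerivAt_pi.2 fun i => HasFDerivAt.fun_sum fun j _ => hasFDerivAt_fill_apply i j v
  have hcol : HasFDerivAt (fun w => colM (fill w))
      (ContinuousLinearMap.pi fun j => ∑ i, fillDeriv i j) v :=
    hasFDerivAt_pi.2 fun j => HasFDerivAt.fun_sum fun i _ => hasFDerivAt_fill_apply i j v
  have hTA :=
    (((hasFDerivAt_escortNegEntropy (l := l) fun k => hfill ▸ hpos k.1 k.2).comp v hcell).sub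
      ((hasFDerivAt_escortNegEntropy (l := l) fun i => hfill ▸ rowM_pos hpos i).comp v hrow)).sub
      ((hasFDerivAt_escortNegEntropy (l := l) fun j => hfill ▸ colM_pos hpos j).comp v hcol)
  rw [gradTA, (hTA.congr_of_eventuallyEq (.of_forall fun w => TA_eq l (fill w))).fderiv]
  simp only [hfill, FunLike.coe_sub, Pi.sub_apply, ContinuousLinearMap.coe_comp,
    Function.comp_apply, ContinuousLinearMap.pi_apply, FunLike.coe_sum, Finset.sum_apply,
    FunLike.coe_smul, Pi.smul_apply, ContinuousLinearMap.proj_apply, smul_eq_mul, fillDeriv_single]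
  simp only [sum_mul_ite_sub_ite]
  simp [Prod.ext_iff, ite_and, Finset.sum_sub_distrib, mul_sub, fullGradTA]
  ring

end Gradient

lemma fullGradTA_of_indep {I J : ℕ} [NeZero I] [NeZero J] {l : ℝ} {p : Fin I → Fin J → ℝ}
    (hpos : ∀ i j, 0 < p i j) (hind : IndepDist p) (i : Fin I) (j : Fin J) :
    fullGradTA l p i j = l ^ 2 * (escortScore l (rowM p) i * (escortRatio l (colM p) j - 1)
      + escortScore l (colM p) j * (escortRatio l (rowM p) i - 1)) := by
  have hprod : (fun k : Fin I × Fin J => p k.1 k.2) = fun k => rowM p k.1 * colM p k.2 :=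
    funext fun k => hind k.1 k.2
  rw [fullGradTA, hprod, escortScore_mul (rowM_pos hpos) (colM_pos hpos)]
  ring

lemma exists_fullGradTA_ne {I J : ℕ} {l : ℝ} {p : Fin (I + 1) → Fin (J + 1) → ℝ}
    (hl : l ≠ 0) (hl1 : l ≠ 1) (hpos : ∀ i j, 0 < p i j) (hind : IndepDist p)
    (hrow : ¬ ∀ i i', rowM p i = rowM p i') (hcol : ¬ ∀ j j', colM p j = colM p j') :
    ∃ s : VIdx I J, fullGradTA l p s.1.1 s.1.2 ≠ fullGradTA l p (Fin.last I) (Fin.last J) := by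
  obtain ⟨i, j, hij⟩ := exists_escortScore_cross_ne hl1 (rowM_pos hpos) (colM_pos hpos) hrow hcol
    (escortScore l (rowM p) (Fin.last I) * (escortRatio l (colM p) (Fin.last J) - 1)
      + escortScore l (colM p) (Fin.last J) * (escortRatio l (rowM p) (Fin.last I) - 1))
  have hne : (i, j) ≠ (Fin.last I, Fin.last J) := by
    rintro ⟨⟩
    exact hij rfl
  refine ⟨⟨(i, j), hne⟩, ?_⟩
  rw [fullGradTA_of_indep hpos hind, fullGradTA_of_indep hpos hind]
  exact fun h => hij (mul_left_cancel₀ (pow_ne_zero 2 hl) h)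

/-- Under independence with non-uniform marginals and `λ ≠ 1`, the delta-method
variance `σ² = ∇ᵀ Σ(v) ∇` is strictly positive. -/
theorem sigma2_pos {I J : ℕ} (l : ℝ) (hl : 0 < l) (hl1 : l ≠ 1)
    (p : Fin (I + 1) → Fin (J + 1) → ℝ) (hp : IsJointDist p)
    (hpos : ∀ i j, 0 < p i j) (hind : IndepDist p)
    (hrow : ¬ ∀ i i', rowM p i = rowM p i')
    (hcol : ¬ ∀ j j', colM p j = colM p j') :
    0 < sigma2 l p := by
  obtain ⟨s, hs⟩ := exists_fullGradTA_ne hl.ne' hl1 hpos hind hrow hcol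
  have hfree : ∑ t : VIdx I J, p t.1.1 t.1.2 = 1 - p (Fin.last I) (Fin.last J) := by
    have := sum_VIdx_add_last fun k => p k.1 k.2
    rw [Fintype.sum_prod_type, hp.2] at this
    linarith
  unfold sigma2
  refine multinomial_quadForm_pos (fun t => hpos _ _) ?_ ⟨s, ?_⟩
  · linarith [hpos (Fin.last I) (Fin.last J)]
  · rw [gradTA_eq hpos hp.2]
    exact sub_ne_zero.2 hs

end
end
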